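/- arXiv:1307.5394 — 5 statements merged into one kernel-verified Lean document; each statement's English description precedes it below -/
import Mathlib

section
/- The polynomial P(x₁,…,xₙ) = x₁·x₂·⋯·xₙ on ℝⁿ satisfies H(P) = (-1)^{n-1}(n-1)·P^{n-2}, where H denotes the Hessian determinant. -/
/-!
Off the diagonal, the `(i, j)` entry of the Hessian of `P = ∏ i, x i` is `∏_{k ≠ i, j} x k`, so
conjugating it by `diag x` gives `P • (J - 1)` with `J` the all-ones matrix, and the matrix
determinant lemma gives `det (J - 1) = (-1)^n (1 - n)`. Hence `P² H(P) = Pⁿ (-1)^(n-1) (n - 1)`,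
which is the formula where no coordinate vanishes, and everywhere by continuity and density.
-/

/-- The `i`-th partial derivative of `F` at `x`. -/
noncomputable def pderivAt {n : ℕ} (F : (Fin n → ℝ) → ℝ) (i : Fin n) (x : Fin n → ℝ) : ℝ :=
  fderiv ℝ F x (Pi.single i 1)

/-- The Hessian matrix of second partial derivatives of `F` at `x`. -/
noncomputable def hessMatrix {n : ℕ} (F : (Fin n → ℝ) → ℝ) (x : Fin n → ℝ) :
    Matrix (Fin n) (Fin n) ℝ :=
  Matrix.of fun i j => pderivAt (fun y => pderivAt F j y) i x

/-- The Hessian determinant of `F` at `x`. -/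
noncomputable def hessDet {n : ℕ} (F : (Fin n → ℝ) → ℝ) (x : Fin n → ℝ) : ℝ :=
  (hessMatrix F x).det

open Matrix Finset

lemma pderivAt_finsetProd {n : ℕ} (s : Finset (Fin n)) (j : Fin n) (x : Fin n → ℝ) :
    pderivAt (fun y => ∏ i ∈ s, y i) j x = if j ∈ s then ∏ i ∈ s.erase j, x i else 0 := by
  rw [pderivAt, (hasFDerivAt_finsetProd (𝕜 := ℝ) (u := s) (x := x)).fderiv]
  simp [Pi.single_apply, sum_ite_eq']

section prodHessMatrix

variable {ι R : Type*} [Fintype ι] [DecidableEq ι] [CommRing R]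

/-- The Hessian matrix of `x ↦ ∏ i, x i`. -/
def prodHessMatrix (x : ι → R) : Matrix ι ι R :=
  of fun i j => if i = j then 0 else ∏ k ∈ (univ.erase j).erase i, x k

lemma det_of_one_sub_one :
    ((of fun _ _ : ι => (1 : R)) - 1).det = (-1) ^ Fintype.card ι * (1 - Fintype.card ι) := by
  have h : (of fun _ _ : ι => (1 : R)) - 1
      = -(1 - replicateCol Unit (fun _ : ι => (1 : R)) *
          replicateRow Unit (fun _ : ι => (1 : R))) := by
    ext i j
    simp [Matrix.one_apply, Matrix.mul_apply]
  rw [h, det_neg, det_one_sub_mul_comm, det_unique]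
  simp [dotProduct]

lemma diagonal_mul_prodHessMatrix_mul_diagonal (x : ι → R) :
    diagonal x * prodHessMatrix x * diagonal x = (∏ i, x i) • ((of fun _ _ => 1) - 1) := by
  ext i j
  rcases eq_or_ne i j with rfl | hij
  · simp [prodHessMatrix]
  · have hi : i ∈ univ.erase j := mem_erase.2 ⟨hij, mem_univ i⟩
    rw [← mul_prod_erase _ _ (mem_univ j), ← mul_prod_erase _ _ hi]
    simp [prodHessMatrix, hij]
    ring

lemma prod_sq_mul_det_prodHessMatrix (x : ι → R) :
    (∏ i, x i) ^ 2 * (prodHessMatrix x).det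
      = (∏ i, x i) ^ Fintype.card ι * ((-1) ^ Fintype.card ι * (1 - Fintype.card ι)) := by
  have h := congrArg det (diagonal_mul_prodHessMatrix_mul_diagonal x)
  rw [det_mul, det_mul, det_diagonal, det_smul, det_of_one_sub_one] at h
  linear_combination h

lemma continuous_det_prodHessMatrix [TopologicalSpace R] [IsTopologicalRing R] :
    Continuous fun x : ι → R => (prodHessMatrix x).det := by
  refine Continuous.matrix_det (continuous_matrix fun i j => ?_)
  simp only [prodHessMatrix, of_apply]
  split_ifs <;> fun_prop

end prodHessMatrix

lemma hessMatrix_prod {n : ℕ} (x : Fin n → ℝ) :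
    hessMatrix (fun y => ∏ i, y i) x = prodHessMatrix x := by
  ext i j
  have h : (fun y => pderivAt (fun y : Fin n → ℝ => ∏ k, y k) j y)
      = fun y => ∏ k ∈ univ.erase j, y k := by
    funext y; simp [pderivAt_finsetProd]
  rw [hessMatrix, of_apply, h, pderivAt_finsetProd]
  simp [prodHessMatrix]

lemma dense_setOf_forall_ne_zero {ι : Type*} : Dense {x : ι → ℝ | ∀ i, x i ≠ 0} := by
  simpa [Set.pi] using dense_pi Set.univ fun (_ : ι) _ => dense_compl_singleton (0 : ℝ)

lemma det_prodHessMatrix {n : ℕ} (hn : 2 ≤ n) (x : Fin n → ℝ) :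
    (prodHessMatrix x).det = (-1) ^ (n - 1) * ((n : ℝ) - 1) * (∏ i, x i) ^ (n - 2) := by
  refine congrFun (continuous_det_prodHessMatrix.ext_on dense_setOf_forall_ne_zero
    (g := fun x : Fin n → ℝ => (-1) ^ (n - 1) * ((n : ℝ) - 1) * (∏ i, x i) ^ (n - 2))
    (by fun_prop) fun y hy => ?_) x
  have hP : (∏ i, y i) ^ 2 ≠ 0 := pow_ne_zero _ (prod_ne_zero_iff.2 fun i _ => hy i)
  obtain ⟨m, rfl⟩ := Nat.exists_eq_add_of_le' hn
  refine mul_left_cancel₀ hP ((prod_sq_mul_det_prodHessMatrix y).trans ?_)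
  simp only [Fintype.card_fin, Nat.add_sub_cancel, Nat.add_succ_sub_one]
  push_cast
  ring

theorem stmt1 (n : ℕ) (hn : 1 ≤ n) :
    ∀ x : Fin n → ℝ,
      hessDet (fun y => ∏ i, y i) x
        = (-1 : ℝ) ^ (n - 1) * ((n : ℝ) - 1) * (∏ i, x i) ^ (n - 2) := by
  intro x
  rw [hessDet, hessMatrix_prod]
  obtain rfl | hn2 := hn.eq_or_lt
  · simp [prodHessMatrix]
  · exact det_prodHessMatrix hn2 x
end

section
/- Let P be a homogeneous polynomial of degree k ≥ 2 on ℝ^{n+1} solving H(P) = c·P^m with m = (n+1)(k-2)/k, and let λ be a nonzero real number. Then on the set where P ≠ 0, H(|P|^λ) = c·((λk-1)/(k-1))·λ^{n+1}·sign(P)^{2(n+1)/k}·(|P|^λ)^{(n+1)(kλ-2)/(kλ)}. -/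
/-!
Off the zero set of `P`, write `|P|^λ = φ ∘ P` with `φ t = |t|^λ`, `r = φ'(P)`, `s = φ''(P)`. The
Hessian is `r D²P + s ∇P ∇Pᵀ`, and Euler's identity for the degree `k - 1` polynomials `∂ⱼP` gives
`xᵀ D²P = (k - 1) ∇Pᵀ`, so it factors as `(r I + s ∇P xᵀ / (k - 1)) D²P`. The matrix determinant
lemma and Euler's identity `xᵀ ∇P = k P` turn its determinant into
`r^(n+1) (1 + s k P / ((k - 1) r)) c P^m = c λ^(n+1) (λk - 1)/(k - 1) |P|^(λ(n+1)) P^(m-n-1)`,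
and `m - (n + 1) = -2(n + 1)/k` matches the exponents.
-/

open MvPolynomial Matrix Filter Topology

theorem Matrix.det_smul_add_vecMulVec_of_vecMul_eq {n K : Type*} [Fintype n] [DecidableEq n]
    [Field K] {r : K} (hr : r ≠ 0) {M : Matrix n n K} {u v w : n → K} (hw : w ᵥ* M = v) :
    det (r • M + vecMulVec u v) = r ^ Fintype.card n * (1 + r⁻¹ * (w ⬝ᵥ u)) * det M := by
  have hfactor : r • M + vecMulVec u v
      = r • (1 + replicateCol Unit (r⁻¹ • u) * replicateRow Unit w) * M := by
    rw [← vecMulVec_eq, smul_add, smul_vecMulVec, smul_smul, mul_inv_cancel₀ hr, one_smul,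
      add_mul, smul_one_mul, vecMulVec_mul, hw]
  rw [hfactor, det_mul, det_smul, det_one_add_replicateCol_mul_replicateRow, dotProduct_smul,
    smul_eq_mul]

theorem Real.sign_eq_abs_div (b : ℝ) : Real.sign b = |b| / b := by
  rcases lt_trichotomy b 0 with hb | rfl | hb
  · rw [Real.sign_of_neg hb, abs_of_neg hb, neg_div, div_self hb.ne]
  · simp [Real.sign_zero]
  · rw [Real.sign_of_pos hb, abs_of_pos hb, div_self hb.ne']

theorem Real.rpow_rpow_mul_sub_div {a : ℝ} (ha : 0 < a) {k lam : ℝ} (hk : k ≠ 0) (hlam : lam ≠ 0)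
    {N e : ℕ} (hke : k * e = 2 * N) :
    (a ^ lam) ^ ((N : ℝ) * (k * lam - 2) / (k * lam)) = (a ^ lam) ^ N / a ^ e := by
  have hexp : lam * ((N : ℝ) * (k * lam - 2) / (k * lam)) = lam * N - e := by
    field_simp
    linear_combination hke
  rw [← Real.rpow_mul ha.le, hexp, Real.rpow_sub ha, ← Real.rpow_natCast, ← Real.rpow_mul ha.le,
    Real.rpow_natCast]

theorem hasDerivAt_abs_rpow_of_ne_zero (lam : ℝ) {b : ℝ} (hb : b ≠ 0) :
    HasDerivAt (fun t => |t| ^ lam) (lam * |b| ^ lam / b) b := by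
  have h : HasDerivAt (fun t => |t| ^ lam) (lam * |b| ^ (lam - 1) * SignType.sign b) b :=
    (Real.hasDerivAt_rpow_const (Or.inl (abs_ne_zero.2 hb))).comp b (hasDerivAt_abs hb)
  refine h.congr_deriv ?_
  rw [Real.rpow_sub_one (abs_ne_zero.2 hb)]
  rcases hb.lt_or_gt with hb | hb <;> simp [hb, abs_of_neg, abs_of_pos] <;> field_simp

theorem hasDerivAt_mul_abs_rpow_div (lam : ℝ) {b : ℝ} (hb : b ≠ 0) :
    HasDerivAt (fun t => lam * |t| ^ lam / t) (lam * (lam - 1) * |b| ^ lam / b ^ 2) b := by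
  have h := ((hasDerivAt_abs_rpow_of_ne_zero lam hb).const_mul lam).div (hasDerivAt_id b) hb
  refine h.congr_deriv ?_
  simp only [id]
  field_simp

theorem Nat.eq_add_two_mul_div_of_mul_eq {k m N : ℕ} (hk : 2 ≤ k) (hdvd : k ∣ 2 * N)
    (hm : k * m = N * (k - 2)) : N = m + 2 * N / k := by
  refine Nat.eq_of_mul_eq_mul_left (by omega : 0 < k) ?_
  rw [Nat.mul_add, hm, Nat.mul_div_cancel' hdvd]
  obtain ⟨j, rfl⟩ : ∃ j, k = j + 2 := ⟨k - 2, by omega⟩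
  simp only [Nat.add_sub_cancel]
  ring

section PartialDerivatives

variable {N : ℕ}

theorem HasFDerivAt.pderivAt_eq {F : (Fin N → ℝ) → ℝ} {F' : (Fin N → ℝ) →L[ℝ] ℝ}
    {x : Fin N → ℝ} (h : HasFDerivAt F F' x) (i : Fin N) : pderivAt F i x = F' (Pi.single i 1) := by
  rw [pderivAt, h.fderiv]

theorem Filter.EventuallyEq.pderivAt_eq {F G : (Fin N → ℝ) → ℝ} {x : Fin N → ℝ}
    (h : F =ᶠ[𝓝 x] G) (i : Fin N) : pderivAt F i x = pderivAt G i x := by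
  rw [pderivAt, pderivAt, h.fderiv_eq]

theorem pderivAt_mul {F G : (Fin N → ℝ) → ℝ} {x : Fin N → ℝ} (hF : DifferentiableAt ℝ F x)
    (hG : DifferentiableAt ℝ G x) (i : Fin N) :
    pderivAt (fun y => F y * G y) i x = pderivAt F i x * G x + F x * pderivAt G i x := by
  rw [pderivAt, fderiv_fun_mul hF hG, pderivAt, pderivAt]
  simp only [_root_.add_apply, _root_.smul_apply, smul_eq_mul]
  ring

end PartialDerivatives

namespace MvPolynomial

variable {N : ℕ}

noncomputable def evalGrad (q : MvPolynomial (Fin N) ℝ) (x : Fin N → ℝ) : Fin N → ℝ :=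
  fun i => eval x (pderiv i q)

theorem hasFDerivAt_eval (q : MvPolynomial (Fin N) ℝ) (x : Fin N → ℝ) :
    HasFDerivAt (fun y => eval y q)
      (∑ i, eval x (pderiv i q) • ContinuousLinearMap.proj (R := ℝ) (φ := fun _ => ℝ) i) x := by
  induction q using MvPolynomial.induction_on with
  | C a => simpa using hasFDerivAt_const a x
  | add p q hp hq =>
    simp only [map_add]
    exact (hp.add hq).congr_fderiv (by simp only [add_smul, Finset.sum_add_distrib])
  | mul_X p j hp =>
    simp only [eval_mul, eval_X]
    refine (hp.mul (hasFDerivAt_apply j x)).congr_fderiv ?_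
    ext w
    simp [pderiv_X, Pi.single_apply, add_mul, Finset.sum_add_distrib, Finset.mul_sum, apply_ite,
      mul_assoc]

theorem pderivAt_comp_eval {φ : ℝ → ℝ} {φ' : ℝ} (q : MvPolynomial (Fin N) ℝ) {x : Fin N → ℝ}
    (hφ : HasDerivAt φ φ' (eval x q)) (i : Fin N) :
    pderivAt (fun y => φ (eval y q)) i x = φ' * evalGrad q x i := by
  have h : HasFDerivAt (fun y => φ (eval y q)) _ x := hφ.comp_hasFDerivAt x (hasFDerivAt_eval q x)
  rw [h.pderivAt_eq]
  simp [evalGrad, Pi.single_apply]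

theorem pderivAt_eval (q : MvPolynomial (Fin N) ℝ) (x : Fin N → ℝ) (i : Fin N) :
    pderivAt (fun y => eval y q) i x = evalGrad q x i := by
  simpa using pderivAt_comp_eval q (hasDerivAt_id (eval x q)) i

theorem hessMatrix_eval (q : MvPolynomial (Fin N) ℝ) (x : Fin N → ℝ) :
    hessMatrix (fun y => eval y q) x = of fun i j => eval x (pderiv i (pderiv j q)) := by
  ext i j
  simp only [hessMatrix, of_apply, pderivAt_eval]
  exact pderivAt_eval (pderiv j q) x i

theorem hessMatrix_comp_eval {φ φ' : ℝ → ℝ} {φ'' : ℝ} (q : MvPolynomial (Fin N) ℝ)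
    {x : Fin N → ℝ} (hφ : ∀ᶠ t in 𝓝 (eval x q), HasDerivAt φ (φ' t) t)
    (hφ' : HasDerivAt φ' φ'' (eval x q)) :
    hessMatrix (fun y => φ (eval y q)) x
      = φ' (eval x q) • hessMatrix (fun y => eval y q) x
        + φ'' • vecMulVec (evalGrad q x) (evalGrad q x) := by
  have hgrad (j : Fin N) : (fun y => pderivAt (fun z => φ (eval z q)) j y)
      =ᶠ[𝓝 x] fun y => φ' (eval y q) * eval y (pderiv j q) := by
    filter_upwards [(continuous_eval q).continuousAt.eventually hφ] with y hy
    exact pderivAt_comp_eval q hy j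
  ext i j
  rw [hessMatrix, of_apply, (hgrad j).pderivAt_eq,
    pderivAt_mul (F := fun y => φ' (eval y q))
      (hφ'.comp_hasFDerivAt x (hasFDerivAt_eval q x)).differentiableAt
      (hasFDerivAt_eval _ x).differentiableAt, pderivAt_comp_eval q hφ', pderivAt_eval,
    hessMatrix_eval]
  simp only [evalGrad, Matrix.add_apply, Matrix.smul_apply, of_apply, vecMulVec_apply, smul_eq_mul]
  ring

theorem IsHomogeneous.dotProduct_evalGrad {q : MvPolynomial (Fin N) ℝ} {d : ℕ}
    (hq : q.IsHomogeneous d) (x : Fin N → ℝ) : x ⬝ᵥ evalGrad q x = d * eval x q := by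
  simpa [dotProduct, evalGrad] using congrArg (eval x) hq.sum_X_mul_pderiv

theorem IsHomogeneous.vecMul_hessMatrix_eval {q : MvPolynomial (Fin N) ℝ} {d : ℕ}
    (hq : q.IsHomogeneous d) (x : Fin N → ℝ) :
    x ᵥ* hessMatrix (fun y => eval y q) x = ((d - 1 : ℕ) : ℝ) • evalGrad q x := by
  ext j
  rw [hessMatrix_eval]
  exact (hq.pderiv (i := j)).dotProduct_evalGrad x

theorem hessMatrix_abs_eval_rpow (q : MvPolynomial (Fin N) ℝ) (lam : ℝ) {x : Fin N → ℝ}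
    (hx : eval x q ≠ 0) :
    hessMatrix (fun y => |eval y q| ^ lam) x
      = (lam * |eval x q| ^ lam / eval x q) • hessMatrix (fun y => eval y q) x
        + vecMulVec ((lam * (lam - 1) * |eval x q| ^ lam / eval x q ^ 2) • evalGrad q x)
            (evalGrad q x) := by
  rw [hessMatrix_comp_eval q (φ' := fun t => lam * |t| ^ lam / t)
    ((eventually_ne_nhds hx).mono fun t ht => hasDerivAt_abs_rpow_of_ne_zero lam ht)
    (hasDerivAt_mul_abs_rpow_div lam hx), smul_vecMulVec]

end MvPolynomial

theorem stmt7 (n k m : ℕ) (hk : 2 ≤ k) (hdvd : k ∣ 2 * (n + 1))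
    (hm : k * m = (n + 1) * (k - 2))
    (c : ℝ) (P : MvPolynomial (Fin (n + 1)) ℝ) (hP : P.IsHomogeneous k)
    (hH : ∀ x : Fin (n + 1) → ℝ,
      hessDet (fun y => MvPolynomial.eval y P) x = c * (MvPolynomial.eval x P) ^ m)
    (lam : ℝ) (hlam : lam ≠ 0) :
    ∀ x : Fin (n + 1) → ℝ, MvPolynomial.eval x P ≠ 0 →
      hessDet (fun y => |MvPolynomial.eval y P| ^ lam) x
        = c * ((lam * (k : ℝ) - 1) / ((k : ℝ) - 1)) * lam ^ (n + 1)
            * (Real.sign (MvPolynomial.eval x P)) ^ (2 * (n + 1) / k)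
            * (|MvPolynomial.eval x P| ^ lam)
                ^ (((n : ℝ) + 1) * ((k : ℝ) * lam - 2) / ((k : ℝ) * lam)) := by
  intro x hb
  set b := eval x P with hbdef
  set e := 2 * (n + 1) / k
  have hk1 : (k : ℝ) - 1 ≠ 0 := by
    have : (2 : ℝ) ≤ k := by exact_mod_cast hk
    linarith
  have hEuler : (((k : ℝ) - 1)⁻¹ • x) ᵥ* hessMatrix (fun y => eval y P) x = evalGrad P x := by
    rw [smul_vecMul, hP.vecMul_hessMatrix_eval, Nat.cast_pred (by omega), smul_smul,
      inv_mul_cancel₀ hk1, one_smul]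
  have hbpow : b ^ (n + 1) = b ^ m * b ^ e := by
    rw [← pow_add, ← Nat.eq_add_two_mul_div_of_mul_eq hk hdvd hm]
  have hke : (k : ℝ) * e = 2 * ((n + 1 : ℕ) : ℝ) := by exact_mod_cast Nat.mul_div_cancel' hdvd
  have hrpow := Real.rpow_rpow_mul_sub_div (abs_pos.2 hb) (Nat.cast_ne_zero.2 (by omega)) hlam hke
  push_cast at hrpow
  rw [hessDet, hessMatrix_abs_eval_rpow P lam hb,
    det_smul_add_vecMulVec_of_vecMul_eq (by positivity) hEuler, ← hessDet, hH x, dotProduct_smul,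
    smul_dotProduct, hP.dotProduct_evalGrad, Fintype.card_fin, hrpow, Real.sign_eq_abs_div, ← hbdef]
  simp only [smul_eq_mul, div_pow, mul_pow]
  rw [hbpow]
  field_simp
  ring
end

section
/- Let P be a nondegenerate quadratic form on ℝⁿ and c = H(P) ≠ 0 (a constant). If l > 1 is an integer dividing n+2, then Q = (x_{n+1} - P(x₁,…,xₙ))^l solves H(Q) = (-1)ⁿ·l^{n+1}·(l-1)·c·Q^{n+1-(n+2)/l}, where H denotes the Hessian determinant on ℝ^{n+1}. -/
open Matrix

theorem Matrix.det_smul_vecMulVec_add_smul {R : Type*} [CommRing R] {n : ℕ} (a b : R)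
    (w : Fin (n + 1) → R) (hw : w (Fin.last n) = 1) (K : Matrix (Fin (n + 1)) (Fin (n + 1)) R)
    (hrow : ∀ j, K (Fin.last n) j = 0) (hcol : ∀ i, K i (Fin.last n) = 0) :
    (a • vecMulVec w w + b • K).det = a * b ^ n * (K.submatrix Fin.castSucc Fin.castSucc).det := by
  set A := (b • K).updateCol (Fin.last n) (a • w)
  set w₀ := Function.update w (Fin.last n) 0
  -- column operations: subtracting `w j` times the last column from column `j` of the left side
  -- leaves `A`, whose last row is `a` in the corner and `0` elsewhere
  have hfactor :
      a • vecMulVec w w + b • K = A * (1 + vecMulVec (Pi.single (Fin.last n) 1) w₀) := by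
    rw [Matrix.mul_add, Matrix.mul_one, mul_vecMulVec, mulVec_single_one]
    ext i j
    rcases Fin.eq_castSucc_or_eq_last j with ⟨j, rfl⟩ | rfl
    · simp [A, w₀, vecMulVec_apply, Fin.castSucc_ne_last]
      ring
    · simp [A, w₀, vecMulVec_apply, hcol, hw]
  have hA : A.det = a * b ^ n * (K.submatrix Fin.castSucc Fin.castSucc).det := by
    rw [det_succ_row A (Fin.last n), Fin.sum_univ_castSucc]
    simp only [A]
    rw [submatrix_updateCol_succAbove]
    simp [hrow, hw, Fin.castSucc_ne_last, submatrix_smul, mul_assoc]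
  rw [hfactor, det_mul, vecMulVec_eq Unit, det_one_add_replicateCol_mul_replicateRow, hA]
  simp [w₀]

section PartialDerivatives

variable {m : ℕ}

theorem pderivAt_eq_of_hasFDerivAt {F : (Fin m → ℝ) → ℝ} {F' : (Fin m → ℝ) →L[ℝ] ℝ}
    {x : Fin m → ℝ} (h : HasFDerivAt F F' x) (i : Fin m) : pderivAt F i x = F' (Pi.single i 1) := by
  rw [pderivAt, h.fderiv]

theorem pderivAt_neg (F : (Fin m → ℝ) → ℝ) (i : Fin m) (x : Fin m → ℝ) :
    pderivAt (fun y => -F y) i x = -pderivAt F i x := by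
  simp [pderivAt]

theorem differentiable_pderivAt {F : (Fin m → ℝ) → ℝ} (hF : ContDiff ℝ 2 F) (i : Fin m) :
    Differentiable ℝ fun x => pderivAt F i x :=
  ((hF.fderiv_right (m := 1) (by norm_num)).clm_apply contDiff_const).differentiable one_ne_zero

theorem pderivAt_pow {u : (Fin m → ℝ) → ℝ} {x : Fin m → ℝ} (hu : DifferentiableAt ℝ u x)
    (l : ℕ) (i : Fin m) : pderivAt (fun y => u y ^ l) i x = l * u x ^ (l - 1) * pderivAt u i x := by
  rw [pderivAt_eq_of_hasFDerivAt (hu.hasFDerivAt.pow l)]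
  simp [pderivAt]

theorem hessMatrix_pow {u : (Fin m → ℝ) → ℝ} (hu : ContDiff ℝ 2 u) (l : ℕ) (x : Fin m → ℝ) :
    hessMatrix (fun y => u y ^ l) x =
      ((l : ℝ) * (l - 1) * u x ^ (l - 2)) •
          vecMulVec (fun i => pderivAt u i x) (fun i => pderivAt u i x)
        + ((l : ℝ) * u x ^ (l - 1)) • hessMatrix u x := by
  have hu₁ : Differentiable ℝ u := hu.differentiable (by norm_num)
  ext i j
  have hgrad : (fun y => pderivAt (fun y => u y ^ l) j y)
      = fun y => l * u y ^ (l - 1) * pderivAt u j y :=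
    funext fun y => pderivAt_pow (hu₁ y) l j
  have hD : HasFDerivAt (fun y => l * u y ^ (l - 1) * pderivAt u j y) _ x :=
    (((hu₁ x).hasFDerivAt.pow (l - 1)).const_mul (l : ℝ)).mul
      (differentiable_pderivAt hu j x).hasFDerivAt
  simp only [hessMatrix, Matrix.of_apply, hgrad, pderivAt_eq_of_hasFDerivAt hD, Matrix.add_apply,
    Matrix.smul_apply, vecMulVec_apply]
  rcases l with _ | l
  · simp
  · simp [pderivAt]
    ring

end PartialDerivatives

section GraphDefect

variable {n : ℕ}

def graphDefect (F : (Fin n → ℝ) → ℝ) (y : Fin (n + 1) → ℝ) : ℝ :=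
  y (Fin.last n) - F (y ∘ Fin.castSucc)

theorem hasFDerivAt_comp_castSucc {G : (Fin n → ℝ) → ℝ} {y : Fin (n + 1) → ℝ}
    (hG : DifferentiableAt ℝ G (y ∘ Fin.castSucc)) :
    HasFDerivAt (fun z : Fin (n + 1) → ℝ => G (z ∘ Fin.castSucc))
      ((fderiv ℝ G (y ∘ Fin.castSucc)).comp
        (LinearMap.funLeft ℝ ℝ Fin.castSucc).toContinuousLinearMap) y :=
  hG.hasFDerivAt.comp y (LinearMap.funLeft ℝ ℝ Fin.castSucc).toContinuousLinearMap.hasFDerivAt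

theorem pderivAt_comp_castSucc {G : (Fin n → ℝ) → ℝ} {y : Fin (n + 1) → ℝ}
    (hG : DifferentiableAt ℝ G (y ∘ Fin.castSucc)) (i : Fin n) :
    pderivAt (fun z => G (z ∘ Fin.castSucc)) i.castSucc y = pderivAt G i (y ∘ Fin.castSucc) := by
  rw [pderivAt_eq_of_hasFDerivAt (hasFDerivAt_comp_castSucc hG), pderivAt,
    ContinuousLinearMap.comp_apply]
  congr 1
  funext k
  simp [Pi.single_apply]

theorem pderivAt_comp_castSucc_last {G : (Fin n → ℝ) → ℝ} {y : Fin (n + 1) → ℝ}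
    (hG : DifferentiableAt ℝ G (y ∘ Fin.castSucc)) :
    pderivAt (fun z => G (z ∘ Fin.castSucc)) (Fin.last n) y = 0 := by
  rw [pderivAt_eq_of_hasFDerivAt (hasFDerivAt_comp_castSucc hG), ContinuousLinearMap.comp_apply]
  convert map_zero (fderiv ℝ G (y ∘ Fin.castSucc))
  funext k
  simp [Fin.castSucc_ne_last]

theorem contDiff_graphDefect {F : (Fin n → ℝ) → ℝ} {k : WithTop ℕ∞} (hF : ContDiff ℝ k F) :
    ContDiff ℝ k (graphDefect F) :=
  (contDiff_apply ℝ ℝ (Fin.last n)).sub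
    (hF.comp (LinearMap.funLeft ℝ ℝ Fin.castSucc).toContinuousLinearMap.contDiff)

theorem pderivAt_graphDefect {F : (Fin n → ℝ) → ℝ} (hF : Differentiable ℝ F) (i : Fin (n + 1))
    (y : Fin (n + 1) → ℝ) :
    pderivAt (graphDefect F) i y
      = (Pi.single i 1 : Fin (n + 1) → ℝ) (Fin.last n)
          - pderivAt (fun z => F (z ∘ Fin.castSucc)) i y := by
  have hD : HasFDerivAt (graphDefect F) _ y :=
    (hasFDerivAt_apply (Fin.last n) y).sub (hasFDerivAt_comp_castSucc (hF _))
  rw [pderivAt_eq_of_hasFDerivAt hD, pderivAt_eq_of_hasFDerivAt (hasFDerivAt_comp_castSucc (hF _))]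
  rfl

theorem pderivAt_graphDefect_last {F : (Fin n → ℝ) → ℝ} (hF : Differentiable ℝ F)
    (y : Fin (n + 1) → ℝ) : pderivAt (graphDefect F) (Fin.last n) y = 1 := by
  simp [pderivAt_graphDefect hF, pderivAt_comp_castSucc_last (hF _)]

theorem pderivAt_graphDefect_castSucc {F : (Fin n → ℝ) → ℝ} (hF : Differentiable ℝ F)
    (i : Fin n) (y : Fin (n + 1) → ℝ) :
    pderivAt (graphDefect F) i.castSucc y = -pderivAt F i (y ∘ Fin.castSucc) := by
  simp [pderivAt_graphDefect hF, pderivAt_comp_castSucc (hF _), Fin.castSucc_ne_last]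

theorem hessMatrix_graphDefect_last_right {F : (Fin n → ℝ) → ℝ} (hF : Differentiable ℝ F)
    (x : Fin (n + 1) → ℝ) (i : Fin (n + 1)) : hessMatrix (graphDefect F) x i (Fin.last n) = 0 := by
  have hconst : (fun y => pderivAt (graphDefect F) (Fin.last n) y) = fun _ => 1 :=
    funext (pderivAt_graphDefect_last hF)
  simp only [hessMatrix, Matrix.of_apply, hconst]
  simp [pderivAt]

theorem hessMatrix_graphDefect_last_left {F : (Fin n → ℝ) → ℝ} (hF : ContDiff ℝ 2 F)
    (x : Fin (n + 1) → ℝ) (j : Fin (n + 1)) : hessMatrix (graphDefect F) x (Fin.last n) j = 0 := by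
  have hF₁ : Differentiable ℝ F := hF.differentiable (by norm_num)
  rcases Fin.eq_castSucc_or_eq_last j with ⟨j, rfl⟩ | rfl
  · simp [hessMatrix, pderivAt_graphDefect_castSucc hF₁, pderivAt_neg,
      pderivAt_comp_castSucc_last (differentiable_pderivAt hF j _)]
  · exact hessMatrix_graphDefect_last_right hF₁ x _

theorem hessMatrix_graphDefect_castSucc {F : (Fin n → ℝ) → ℝ} (hF : ContDiff ℝ 2 F)
    (x : Fin (n + 1) → ℝ) :
    (hessMatrix (graphDefect F) x).submatrix Fin.castSucc Fin.castSucc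
      = -hessMatrix F (x ∘ Fin.castSucc) := by
  have hF₁ : Differentiable ℝ F := hF.differentiable (by norm_num)
  ext i j
  simp [hessMatrix, pderivAt_graphDefect_castSucc hF₁, pderivAt_neg,
    pderivAt_comp_castSucc (differentiable_pderivAt hF j _)]

end GraphDefect

theorem hessDet_graphDefect_pow {n : ℕ} {F : (Fin n → ℝ) → ℝ} (hF : ContDiff ℝ 2 F) (l : ℕ)
    (x : Fin (n + 1) → ℝ) :
    hessDet (fun y => graphDefect F y ^ l) x
      = (l * (l - 1) * graphDefect F x ^ (l - 2)) * (l * graphDefect F x ^ (l - 1)) ^ n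
          * ((-1) ^ n * hessDet F (x ∘ Fin.castSucc)) := by
  have hF₁ : Differentiable ℝ F := hF.differentiable (by norm_num)
  rw [hessDet, hessMatrix_pow (contDiff_graphDefect hF),
    det_smul_vecMulVec_add_smul _ _ _ (pderivAt_graphDefect_last hF₁ x) _
      (hessMatrix_graphDefect_last_left hF x) (hessMatrix_graphDefect_last_right hF₁ x),
    hessMatrix_graphDefect_castSucc hF, det_neg, Fintype.card_fin, hessDet]

theorem MvPolynomial.contDiff_eval {n : ℕ} (P : MvPolynomial (Fin n) ℝ) {k : WithTop ℕ∞} :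
    ContDiff ℝ k fun y : Fin n → ℝ => MvPolynomial.eval y P := by
  induction P using MvPolynomial.induction_on with
  | C a => simpa using contDiff_const
  | add p q hp hq => simpa using hp.add hq
  | mul_X p i hp => simpa using hp.mul (contDiff_apply ℝ ℝ i)

theorem Nat.sub_two_add_sub_one_mul_eq {n l : ℕ} (hdvd : l ∣ n + 2) :
    l - 2 + (l - 1) * n = l * (n + 1 - (n + 2) / l) := by
  obtain ⟨k, hk⟩ := hdvd
  rcases l with _ | _ | l
  · omega
  · simp
  · have hk₁ : 1 ≤ k := by nlinarith
    rw [hk, Nat.mul_div_cancel_left _ (by omega)]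
    have hkn : k ≤ n + 1 := by nlinarith
    rw [show l + 1 + 1 - 2 = l by omega, show l + 1 + 1 - 1 = l + 1 by omega]
    zify [hkn] at hk ⊢
    linear_combination -hk

theorem stmt14_general (n l : ℕ) (hdvd : l ∣ n + 2)
    (P : MvPolynomial (Fin n) ℝ)
    (c : ℝ)
    (hH : ∀ x : Fin n → ℝ, hessDet (fun y => MvPolynomial.eval y P) x = c) :
    ∀ x : Fin (n + 1) → ℝ,
      hessDet (fun y : Fin (n + 1) → ℝ =>
          (y (Fin.last n) - MvPolynomial.eval (y ∘ Fin.castSucc) P) ^ l) x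
        = (-1 : ℝ) ^ n * (l : ℝ) ^ (n + 1) * ((l : ℝ) - 1) * c
            * ((x (Fin.last n) - MvPolynomial.eval (x ∘ Fin.castSucc) P) ^ l)
                ^ (n + 1 - (n + 2) / l) := by
  intro x
  have h := hessDet_graphDefect_pow (MvPolynomial.contDiff_eval P) l x
  simp only [graphDefect, hH] at h
  rw [h, ← pow_mul, ← Nat.sub_two_add_sub_one_mul_eq hdvd]
  ring

theorem stmt14 (n l : ℕ) (hl : 1 < l) (hdvd : l ∣ n + 2)
    (P : MvPolynomial (Fin n) ℝ) (hP : P.IsHomogeneous 2)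
    (c : ℝ) (hc : c ≠ 0)
    (hH : ∀ x : Fin n → ℝ, hessDet (fun y => MvPolynomial.eval y P) x = c) :
    ∀ x : Fin (n + 1) → ℝ,
      hessDet (fun y : Fin (n + 1) → ℝ =>
          (y (Fin.last n) - MvPolynomial.eval (y ∘ Fin.castSucc) P) ^ l) x
        = (-1 : ℝ) ^ n * (l : ℝ) ^ (n + 1) * ((l : ℝ) - 1) * c
            * ((x (Fin.last n) - MvPolynomial.eval (x ∘ Fin.castSucc) P) ^ l)
                ^ (n + 1 - (n + 2) / l) :=
  stmt14_general n l hdvd P c hH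
end

section
/- For an LSA (left-symmetric algebra) (A, ·) over a field of characteristic zero, the kernel of the left regular representation L (i.e., {a ∈ A : a·x = 0 for all x ∈ A}) is a solvable Lie subalgebra of the underlying Lie algebra (A, [·,·]) with bracket [a,b] = a·b - b·a, and the map n ↦ -R(n) (R the right regular representation, R(a)b = b·a) is a Lie algebra representation of this subalgebra on A. -/
/-- The derived series of a submodule `S` with respect to the bracket
`[a,b] = a·b - b·a` associated with the bilinear multiplication `mul`. -/
def lsaDerivedSeries {K A : Type*} [Field K] [AddCommGroup A] [Module K A]
    (mul : A →ₗ[K] A →ₗ[K] A) (S : Submodule K A) : ℕ → Submodule K A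
  | 0 => S
  | (N + 1) => Submodule.span K
      {y | ∃ a ∈ lsaDerivedSeries mul S N, ∃ b ∈ lsaDerivedSeries mul S N,
        y = mul a b - mul b a}

/-!
On the kernel of `L` every product `a·b` vanishes, so the bracket is identically zero there: the
kernel is an abelian Lie subalgebra. Left-symmetry applied to `x, b, a` with `L(b) = 0` gives
`(x·b)·a = 0`, i.e. `R(a) ∘ R(b) = 0`, so both sides of the representation identity vanish.
-/

section LeftRegularKernel

variable {R A : Type*} [CommRing R] [AddCommGroup A] [Module R A] (mul : A →ₗ[R] A →ₗ[R] A)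

theorem commutator_eq_zero_of_mem_ker {a b : A} (ha : a ∈ LinearMap.ker mul)
    (hb : b ∈ LinearMap.ker mul) : mul a b - mul b a = 0 := by
  rw [LinearMap.mem_ker] at ha hb
  simp [ha, hb]

theorem flip_comp_flip_eq_zero_of_mem_ker
    (hlsa : ∀ x y z : A,
      mul (mul x y) z - mul x (mul y z) = mul (mul y x) z - mul y (mul x z))
    (a : A) {b : A} (hb : b ∈ LinearMap.ker mul) : mul.flip a ∘ₗ mul.flip b = 0 := by
  rw [LinearMap.mem_ker] at hb
  ext x
  simpa [hb] using hlsa x b a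

end LeftRegularKernel

theorem lsaDerivedSeries_one_eq_bot {K A : Type*} [Field K] [AddCommGroup A] [Module K A]
    (mul : A →ₗ[K] A →ₗ[K] A) {S : Submodule K A}
    (hS : ∀ a ∈ S, ∀ b ∈ S, mul a b - mul b a = 0) : lsaDerivedSeries mul S 1 = ⊥ := by
  rw [lsaDerivedSeries, Submodule.span_eq_bot]
  rintro y ⟨a, ha, b, hb, rfl⟩
  exact hS a ha b hb

theorem stmt18_general {K A : Type*} [Field K] [AddCommGroup A] [Module K A]
    (mul : A →ₗ[K] A →ₗ[K] A)
    (hlsa : ∀ x y z : A,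
      mul (mul x y) z - mul x (mul y z) = mul (mul y x) z - mul y (mul x z)) :
    -- the kernel of the left regular representation is closed under the bracket
    (∀ a ∈ LinearMap.ker mul, ∀ b ∈ LinearMap.ker mul,
        mul a b - mul b a ∈ LinearMap.ker mul)
    -- and is solvable as a Lie subalgebra
    ∧ (∃ N : ℕ, lsaDerivedSeries mul (LinearMap.ker mul) N = ⊥)
    -- and `n ↦ -R(n)` is a Lie algebra representation of it on `A`
    ∧ (∀ a ∈ LinearMap.ker mul, ∀ b ∈ LinearMap.ker mul,
        -(mul.flip (mul a b - mul b a))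
          = (-(mul.flip a)) ∘ₗ (-(mul.flip b)) - (-(mul.flip b)) ∘ₗ (-(mul.flip a))) := by
  refine ⟨fun a ha b hb => ?_, ⟨1, ?_⟩, fun a ha b hb => ?_⟩
  · rw [commutator_eq_zero_of_mem_ker mul ha hb]
    exact Submodule.zero_mem _
  · exact lsaDerivedSeries_one_eq_bot mul fun a ha b hb => commutator_eq_zero_of_mem_ker mul ha hb
  · simp only [commutator_eq_zero_of_mem_ker mul ha hb, LinearMap.neg_comp, LinearMap.comp_neg,
      flip_comp_flip_eq_zero_of_mem_ker mul hlsa a hb,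
      flip_comp_flip_eq_zero_of_mem_ker mul hlsa b ha, map_zero, neg_zero, sub_self]

theorem stmt18 {K A : Type*} [Field K] [CharZero K] [AddCommGroup A] [Module K A]
    [FiniteDimensional K A] (mul : A →ₗ[K] A →ₗ[K] A)
    (hlsa : ∀ x y z : A,
      mul (mul x y) z - mul x (mul y z) = mul (mul y x) z - mul y (mul x z)) :
    -- the kernel of the left regular representation is closed under the bracket
    (∀ a ∈ LinearMap.ker mul, ∀ b ∈ LinearMap.ker mul,
        mul a b - mul b a ∈ LinearMap.ker mul)
    -- and is solvable as a Lie subalgebra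
    ∧ (∃ N : ℕ, lsaDerivedSeries mul (LinearMap.ker mul) N = ⊥)
    -- and `n ↦ -R(n)` is a Lie algebra representation of it on `A`
    ∧ (∀ a ∈ LinearMap.ker mul, ∀ b ∈ LinearMap.ker mul,
        -(mul.flip (mul a b - mul b a))
          = (-(mul.flip a)) ∘ₗ (-(mul.flip b)) - (-(mul.flip b)) ∘ₗ (-(mul.flip a))) :=
  stmt18_general mul hlsa
end

section
/- Let (A, ·) be an LSA over a field of characteristic zero that is completely solvable (there is a basis in which every left multiplication operator L(x) is upper triangular) and whose trace-form τ(x,y) = tr(R(x)R(y)) is nondegenerate, where R is the right regular representation. Then A contains an idempotent u (u·u = u) such that the span of u is a left ideal, R(u)² = R(u), and tr R(u) = 1. -/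
/-!
Triangularity makes the first basis vector `e` a common eigenvector of all left multiplications,
`x · e = λ(x) e`. Left-symmetry applied to `e` shows `λ(x · y) = λ(y · x)`. Then `R(e) = e ⊗ λ` has
rank one, so `τ(e, y) = λ(e · y) = λ(y) λ(e)`; nondegeneracy of `τ` forces `λ(e) ≠ 0`, and
`u = λ(e)⁻¹ e` is the required idempotent.
-/

open LinearMap

section

variable {K A : Type*} [Field K] [AddCommGroup A] [Module K A]

lemma LinearMap.apply_basis_eq_smul_of_toMatrix_triangular {ι : Type*} [Fintype ι] [DecidableEq ι]
    [LinearOrder ι] (b : Module.Basis ι K A) (f : A →ₗ[K] A)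
    (hf : ∀ i j, j < i → toMatrix b b f i j = 0) {i₀ : ι} (hi₀ : ∀ j, i₀ ≤ j) :
    f (b i₀) = b.coord i₀ (f (b i₀)) • b i₀ := by
  refine b.ext_elem fun i => ?_
  rcases (hi₀ i).eq_or_lt with rfl | hlt
  · simp
  · have h := hf i i₀ hlt
    rw [toMatrix_apply] at h
    simp [h, hlt.ne]

section LeftSymmetric

variable (mul : A →ₗ[K] A →ₗ[K] A) {e : A} {lam : A →ₗ[K] K}

lemma map_mul_comm_of_forall_mul_eq_smul
    (hlsa : ∀ x y z : A,
      mul (mul x y) z - mul x (mul y z) = mul (mul y x) z - mul y (mul x z))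
    (he : e ≠ 0) (heig : ∀ x, mul x e = lam x • e) (x y : A) :
    lam (mul x y) = lam (mul y x) := by
  have h := hlsa x y e
  simp only [heig, map_smul, smul_smul, mul_comm (lam y) (lam x), sub_left_inj] at h
  exact smul_left_injective K he h

lemma flip_eq_smulRight_of_forall_mul_eq_smul (heig : ∀ x, mul x e = lam x • e) :
    mul.flip e = lam.smulRight e := by
  ext x
  simp [heig]

variable [FiniteDimensional K A]

lemma trace_flip_comp_flip_of_forall_mul_eq_smul (heig : ∀ x, mul x e = lam x • e) (y : A) :
    trace K A (mul.flip e ∘ₗ mul.flip y) = lam (mul e y) := by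
  have h : mul.flip e ∘ₗ mul.flip y = (lam ∘ₗ mul.flip y).smulRight e := by
    ext x
    simp [heig]
  rw [h, trace_smulRight, comp_apply, flip_apply]

lemma map_self_ne_zero_of_forall_mul_eq_smul
    (hlsa : ∀ x y z : A,
      mul (mul x y) z - mul x (mul y z) = mul (mul y x) z - mul y (mul x z))
    (hτ : ∀ x : A,
      (∀ y : A, trace K A ((mul.flip x) ∘ₗ (mul.flip y)) = 0) → x = 0)
    (he : e ≠ 0) (heig : ∀ x, mul x e = lam x • e) :
    lam e ≠ 0 := by
  intro h0
  refine he (hτ e fun y => ?_)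
  rw [trace_flip_comp_flip_of_forall_mul_eq_smul mul heig,
    map_mul_comm_of_forall_mul_eq_smul mul hlsa he heig, heig, map_smul, h0, smul_zero]

lemma idempotent_of_forall_mul_eq_smul {u : A} (heig : ∀ x, mul x u = lam x • u)
    (hu : lam u = 1) :
    mul u u = u
      ∧ (∀ x : A, mul x u ∈ Submodule.span K {u})
      ∧ (mul.flip u) ∘ₗ (mul.flip u) = mul.flip u
      ∧ trace K A (mul.flip u) = 1 := by
  have huu : mul u u = u := by rw [heig, hu, one_smul]
  refine ⟨huu, fun x => ?_, ?_, ?_⟩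
  · rw [heig]
    exact Submodule.smul_mem _ _ (Submodule.mem_span_singleton_self u)
  · ext x
    simp [heig, hu]
  · rw [flip_eq_smulRight_of_forall_mul_eq_smul mul heig, trace_smulRight, hu]

end LeftSymmetric

end

theorem stmt19_general {K A : Type*} [Field K] [AddCommGroup A] [Module K A]
    [FiniteDimensional K A] [Nontrivial A]
    (mul : A →ₗ[K] A →ₗ[K] A)
    -- left-symmetry of the multiplication
    (hlsa : ∀ x y z : A,
      mul (mul x y) z - mul x (mul y z) = mul (mul y x) z - mul y (mul x z))
    -- complete solvability: in some basis every left multiplication operator is triangular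
    (nA : ℕ) (b : Module.Basis (Fin nA) K A)
    (htri : ∀ (x : A) (i j : Fin nA), j < i →
      LinearMap.toMatrix b b (mul x) i j = 0)
    -- nondegeneracy of the trace-form τ(x,y) = tr (R(x) R(y))
    (hτ : ∀ x : A,
      (∀ y : A, LinearMap.trace K A ((mul.flip x) ∘ₗ (mul.flip y)) = 0) → x = 0) :
    ∃ u : A, mul u u = u
      ∧ (∀ x : A, mul x u ∈ Submodule.span K {u})
      ∧ (mul.flip u) ∘ₗ (mul.flip u) = mul.flip u
      ∧ LinearMap.trace K A (mul.flip u) = 1 := by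
  have hnA : 0 < nA := Fin.pos_iff_nonempty.mpr b.index_nonempty
  set e := b ⟨0, hnA⟩
  set lam := b.coord ⟨0, hnA⟩ ∘ₗ mul.flip e
  have heig : ∀ x, mul x e = lam x • e := fun x =>
    (mul x).apply_basis_eq_smul_of_toMatrix_triangular b (htri x) fun _ => Nat.zero_le _
  have he : e ≠ 0 := b.ne_zero _
  have hlam := map_self_ne_zero_of_forall_mul_eq_smul mul hlsa hτ he heig
  refine ⟨(lam e)⁻¹ • e, idempotent_of_forall_mul_eq_smul mul (lam := lam) (fun x => ?_) ?_⟩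
  · rw [map_smul, heig, smul_comm]
  · rw [map_smul, smul_eq_mul, inv_mul_cancel₀ hlam]

theorem stmt19 {K A : Type*} [Field K] [CharZero K] [AddCommGroup A] [Module K A]
    [FiniteDimensional K A] [Nontrivial A]
    (mul : A →ₗ[K] A →ₗ[K] A)
    -- left-symmetry of the multiplication
    (hlsa : ∀ x y z : A,
      mul (mul x y) z - mul x (mul y z) = mul (mul y x) z - mul y (mul x z))
    -- complete solvability: in some basis every left multiplication operator is triangular
    (nA : ℕ) (b : Module.Basis (Fin nA) K A)
    (htri : ∀ (x : A) (i j : Fin nA), j < i →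
      LinearMap.toMatrix b b (mul x) i j = 0)
    -- nondegeneracy of the trace-form τ(x,y) = tr (R(x) R(y))
    (hτ : ∀ x : A,
      (∀ y : A, LinearMap.trace K A ((mul.flip x) ∘ₗ (mul.flip y)) = 0) → x = 0) :
    ∃ u : A, mul u u = u
      ∧ (∀ x : A, mul x u ∈ Submodule.span K {u})
      ∧ (mul.flip u) ∘ₗ (mul.flip u) = mul.flip u
      ∧ LinearMap.trace K A (mul.flip u) = 1 :=
  stmt19_general mul hlsa nA b htri hτ
end
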